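/- arXiv:math/0502365 — 3 statements merged into one kernel-verified Lean document; each statement's English description precedes it below -/
import Mathlib

section
/- For each integer i ≥ 1, the function f^i(t) = cosh(√t/2)·(2 sinh(√t/2)/√t)^{2i-1} (extended analytically at t=0) satisfies the functional equation 4(i+j-1) t^{i+j-2} f^{i+j-1}(t) + (i+j) t^{i+j-1} f^{i+j}(t) = 4 d/dt ( t^{i+j-1} f^i(t) f^j(t) ) for all integers i, j ≥ 1. -/
/-!
Substitute `w = √t / 2`. Then `t ^ (n - 1) * f^n(t) = cosh w * (2 sinh w) ^ (2n - 1) / √t` and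
`t ^ (i + j - 1) * f^i(t) * f^j(t) = cosh w ^ 2 * (2 sinh w) ^ (2(i + j - 1))`, so the identity becomes
one about the `w`-derivative of `cosh w ^ 2 * (2 sinh w) ^ (m + 1)`, which follows from
`cosh w ^ 2 = 1 + sinh w ^ 2`; the chain rule contributes the factor `dw/dt = 1 / (4√t)`.
-/

open Real Filter Topology

noncomputable def fgen (i : ℕ) (t : ℝ) : ℝ :=
  Real.cosh (Real.sqrt t / 2) * (2 * Real.sinh (Real.sqrt t / 2) / Real.sqrt t) ^ (2 * i - 1)

theorem hasDerivAt_cosh_sq_mul_two_sinh_pow (m : ℕ) (w : ℝ) :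
    HasDerivAt (fun w => cosh w ^ 2 * (2 * sinh w) ^ (m + 1))
      (2 * (m + 1) * (cosh w * (2 * sinh w) ^ m)
        + (m + 3) / 2 * (cosh w * (2 * sinh w) ^ (m + 2))) w := by
  refine (((hasDerivAt_cosh w).fun_pow 2).mul
    (((hasDerivAt_sinh w).const_mul 2).fun_pow (m + 1))).congr_deriv ?_
  rw [Nat.add_sub_cancel, cosh_sq]
  push_cast
  ring

theorem hasDerivAt_cosh_sq_mul_two_sinh_pow_comp_sqrt_div_two (m : ℕ) {t : ℝ} (ht : 0 < t) :
    HasDerivAt (fun s => cosh (√s / 2) ^ 2 * (2 * sinh (√s / 2)) ^ (m + 1))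
      ((2 * (m + 1) * (cosh (√t / 2) * (2 * sinh (√t / 2)) ^ m)
        + (m + 3) / 2 * (cosh (√t / 2) * (2 * sinh (√t / 2)) ^ (m + 2))) / (4 * √t)) t := by
  refine ((hasDerivAt_cosh_sq_mul_two_sinh_pow m _).comp t
    ((hasDerivAt_sqrt ht.ne').div_const 2)).congr_deriv ?_
  field_simp
  ring

theorem pow_mul_fgen_succ (n : ℕ) {t : ℝ} (ht : 0 < t) :
    t ^ n * fgen (n + 1) t = cosh (√t / 2) * (2 * sinh (√t / 2)) ^ (2 * n + 1) / √t := by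
  have hsqrt : √t ≠ 0 := (sqrt_pos.mpr ht).ne'
  rw [fgen, show 2 * (n + 1) - 1 = 2 * n + 1 by omega,
    show t ^ n = √t ^ (2 * n) by rw [pow_mul, sq_sqrt ht.le], div_pow]
  field_simp
  ring

/-- the functions `f^i` satisfy
`4(i+j-1) t^{i+j-2} f^{i+j-1} + (i+j) t^{i+j-1} f^{i+j} = 4 d/dt (t^{i+j-1} f^i f^j)`. -/
theorem stmt0 (i j : ℕ) (hi : 1 ≤ i) (hj : 1 ≤ j) (t : ℝ) (ht : 0 < t) :
    HasDerivAt (fun s : ℝ => s ^ (i + j - 1) * fgen i s * fgen j s)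
      ((4 * ((i : ℝ) + j - 1) * t ^ (i + j - 2) * fgen (i + j - 1) t
        + ((i : ℝ) + j) * t ^ (i + j - 1) * fgen (i + j) t) / 4) t := by
  obtain ⟨a, rfl⟩ := Nat.exists_eq_add_of_le' hi
  obtain ⟨b, rfl⟩ := Nat.exists_eq_add_of_le' hj
  rw [show a + 1 + (b + 1) - 1 = a + b + 1 by omega, show a + 1 + (b + 1) - 2 = a + b by omega,
    show a + 1 + (b + 1) = a + b + 1 + 1 by omega]
  have hfun : (fun s : ℝ => s ^ (a + b + 1) * fgen (a + 1) s * fgen (b + 1) s) =ᶠ[𝓝 t]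
      fun s => cosh (√s / 2) ^ 2 * (2 * sinh (√s / 2)) ^ (2 * (a + b) + 1 + 1) := by
    filter_upwards [Ioi_mem_nhds ht] with s hs
    have hsqrt : √s ≠ 0 := (sqrt_pos.mpr hs).ne'
    calc s ^ (a + b + 1) * fgen (a + 1) s * fgen (b + 1) s
        = √s ^ 2 * ((s ^ a * fgen (a + 1) s) * (s ^ b * fgen (b + 1) s)) := by
          rw [sq_sqrt hs.le]; ring
      _ = _ := by
          rw [pow_mul_fgen_succ a hs, pow_mul_fgen_succ b hs]
          field_simp
          ring
  refine ((hasDerivAt_cosh_sq_mul_two_sinh_pow_comp_sqrt_div_two (2 * (a + b) + 1) ht)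
    |>.congr_of_eventuallyEq hfun).congr_deriv ?_
  have hlow := pow_mul_fgen_succ (a + b) ht
  have hhigh := pow_mul_fgen_succ (a + b + 1) ht
  push_cast
  linear_combination (-(a + b + 1 : ℝ)) * hlow - ((a + b + 2) / 4 : ℝ) * hhigh
end

section
/- The coefficients B^i_{i+α} of the power series expansion f^i(t) = Σ_{α≥0} B^i_{i+α} t^α of f^i(t) = cosh(√t/2)(2 sinh(√t/2)/√t)^{2i-1} satisfy B^i_i = 1 and the recursion 4(i+j-1) B^{i+j-1}_m + (i+j) B^{i+j}_m = 4m Σ_{α+β=m+1} B^i_α B^j_β for all i, j ≥ 1 and m ≥ i+j (with B^i_α = 0 for α < i). -/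
open Filter Topology

/-! ### Auxiliary lemmas -/

private lemma tail_bound' (b : ℕ → ℝ) (hs : Summable fun k => |b (k+1)| * (2⁻¹:ℝ)^k)
    {t : ℝ} (ht0 : 0 < t) (ht : t ≤ 2⁻¹) {g : ℝ}
    (h : HasSum (fun k => b k * t ^ k) g) :
    |g - b 0| ≤ (∑' k, |b (k+1)| * (2⁻¹:ℝ)^k) * t := by
  have h1 : HasSum (fun k => b (k+1) * t ^ (k+1)) (g - b 0) := by
    have := (hasSum_nat_add_iff' 1).mpr h
    simpa using this
  have h2 : |g - b 0| ≤ ∑' k, |b (k+1) * t ^ (k+1)| := by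
    have hsum2 : Summable fun k => ‖b (k+1) * t ^ (k+1)‖ := by
      simpa only [Real.norm_eq_abs] using (summable_abs_iff.mpr h1.summable)
    rw [← h1.tsum_eq]
    simpa only [Real.norm_eq_abs] using norm_tsum_le_tsum_norm hsum2
  refine h2.trans ?_
  rw [← tsum_mul_right]
  apply Summable.tsum_le_tsum _ (summable_abs_iff.mpr h1.summable) (hs.mul_right t)
  intro k
  rw [abs_mul, abs_pow, abs_of_pos ht0, pow_succ, ← mul_assoc]
  exact mul_le_mul_of_nonneg_right
    (mul_le_mul_of_nonneg_left (pow_le_pow_left₀ ht0.le ht k) (abs_nonneg _)) ht0.le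

private lemma L0' (b : ℕ → ℝ) (g : ℝ → ℝ)
    (h : ∀ t : ℝ, 0 < t → t < 1 → HasSum (fun k => b k * t ^ k) (g t)) :
    Tendsto g (𝓝[>] (0:ℝ)) (𝓝 (b 0)) := by
  have hs : Summable fun k => |b (k+1)| * (2⁻¹:ℝ)^k := by
    have := (h 2⁻¹ (by norm_num) (by norm_num)).summable
    have h2 := (summable_abs_iff.mpr this)
    have h3 := ((summable_nat_add_iff 1).mpr h2).mul_right 2
    apply h3.congr
    intro k
    rw [abs_mul, abs_pow, abs_of_pos (by norm_num : (0:ℝ) < 2⁻¹), pow_succ]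
    ring
  set C := ∑' k, |b (k+1)| * (2⁻¹:ℝ)^k with hC
  have hC0 : 0 ≤ C := tsum_nonneg (fun k => by positivity)
  rw [Metric.tendsto_nhdsWithin_nhds]
  intro ε hε
  refine ⟨min 2⁻¹ (ε / (C+1)), lt_min (by norm_num) (div_pos hε (by linarith)), fun t ht hd => ?_⟩
  have ht0 : 0 < t := ht
  rw [Real.dist_eq, sub_zero, abs_of_pos ht0] at hd
  have hb := tail_bound' b hs ht0 (le_of_lt (lt_of_lt_of_le hd (min_le_left _ _)))
    (h t ht0 (lt_of_lt_of_le (lt_of_lt_of_le hd (min_le_left _ _)) (by norm_num)))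
  rw [Real.dist_eq]
  rw [← hC] at hb
  have : C * t < ε := by
    have h4 : t < ε / (C+1) := lt_of_lt_of_le hd (min_le_right _ _)
    have : C * t ≤ (C+1) * t := by nlinarith
    calc C * t ≤ (C+1)*t := this
      _ < (C+1) * (ε/(C+1)) := by apply mul_lt_mul_of_pos_left h4; positivity
      _ = ε := by field_simp
  linarith [hb]

private lemma LA0' (e : ℕ → ℝ) (h : ∀ t : ℝ, 0 < t → t < 1 → HasSum (fun k => e k * t ^ k) 0) :
    e 0 = 0 := by
  have h1 : Tendsto (fun _ : ℝ => (0:ℝ)) (𝓝[>] (0:ℝ)) (𝓝 (e 0)) := by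
    have := L0' e (fun _ => 0) h
    simpa using this
  have h2 : Tendsto (fun _ : ℝ => (0:ℝ)) (𝓝[>] (0:ℝ)) (𝓝 0) := tendsto_const_nhds
  exact (tendsto_nhds_unique h2 h1).symm

private lemma LA' (e : ℕ → ℝ) (h : ∀ t : ℝ, 0 < t → t < 1 → HasSum (fun k => e k * t ^ k) 0) :
    ∀ k, e k = 0 := by
  suffices H : ∀ (k : ℕ) (e : ℕ → ℝ),
      (∀ t : ℝ, 0 < t → t < 1 → HasSum (fun k => e k * t ^ k) 0) → e k = 0 from
    fun k => H k e h
  intro k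
  induction k with
  | zero => exact fun e h => LA0' e h
  | succ k ih =>
    intro e h
    have h0 : e 0 = 0 := LA0' e h
    refine ih (fun k => e (k+1)) (fun t ht0 ht1 => ?_)
    have h1 : HasSum (fun k => e (k+1) * t ^ (k+1)) 0 := by
      have := (hasSum_nat_add_iff' 1).mpr (h t ht0 ht1)
      simpa [h0] using this
    have h2 := h1.mul_right t⁻¹
    have ht0' : t ≠ 0 := ne_of_gt ht0
    simpa [pow_succ, mul_assoc, mul_inv_cancel₀ ht0'] using h2

noncomputable def fder (i : ℕ) (t : ℝ) : ℝ :=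
  Real.sinh (Real.sqrt t / 2) * (1 / (2 * Real.sqrt t) / 2) *
      (2 * Real.sinh (Real.sqrt t / 2) / Real.sqrt t) ^ (2 * i - 1) +
    Real.cosh (Real.sqrt t / 2) *
      ((2 * i - 1 : ℕ) * (2 * Real.sinh (Real.sqrt t / 2) / Real.sqrt t) ^ (2 * i - 1 - 1) *
        ((2 * (Real.cosh (Real.sqrt t / 2) * (1 / (2 * Real.sqrt t) / 2)) * Real.sqrt t -
            2 * Real.sinh (Real.sqrt t / 2) * (1 / (2 * Real.sqrt t))) / Real.sqrt t ^ 2))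

private lemma hasDerivAt_fgen' (i : ℕ) {t : ℝ} (ht : 0 < t) :
    HasDerivAt (fgen i) (fder i t) t := by
  have hsne : Real.sqrt t ≠ 0 := ne_of_gt (Real.sqrt_pos.mpr ht)
  have hsq : HasDerivAt Real.sqrt (1 / (2 * Real.sqrt t)) t := Real.hasDerivAt_sqrt ht.ne'
  have h2 : HasDerivAt (fun y => Real.sqrt y / 2) (1 / (2 * Real.sqrt t) / 2) t := hsq.div_const 2
  have hcosh : HasDerivAt (fun y => Real.cosh (Real.sqrt y / 2))
      (Real.sinh (Real.sqrt t / 2) * (1 / (2 * Real.sqrt t) / 2)) t :=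
    (Real.hasDerivAt_cosh _).comp t h2
  have hsinh : HasDerivAt (fun y => Real.sinh (Real.sqrt y / 2))
      (Real.cosh (Real.sqrt t / 2) * (1 / (2 * Real.sqrt t) / 2)) t :=
    (Real.hasDerivAt_sinh _).comp t h2
  have hnum : HasDerivAt (fun y => 2 * Real.sinh (Real.sqrt y / 2))
      (2 * (Real.cosh (Real.sqrt t / 2) * (1 / (2 * Real.sqrt t) / 2))) t := hsinh.const_mul 2
  have hbase : HasDerivAt (fun y => 2 * Real.sinh (Real.sqrt y / 2) / Real.sqrt y)
      ((2 * (Real.cosh (Real.sqrt t / 2) * (1 / (2 * Real.sqrt t) / 2)) * Real.sqrt t -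
          2 * Real.sinh (Real.sqrt t / 2) * (1 / (2 * Real.sqrt t))) / Real.sqrt t ^ 2) t :=
    hnum.div hsq hsne
  have hpow := hbase.pow (2 * i - 1)
  exact hcosh.mul hpow

private lemma scalar_id' (R x c s : ℝ) (hx : x ≠ 0) (hcs : c^2 = s^2 + 1) :
    4*(R-1)*(c*(2*s/x) - c^2*(2*s/x)^2)/x^2 + R*(c*(2*s/x)^3)
      = 2*s*c*(2*s/x)^2/x + 4*(c^2*((c/2 - s/x)/x^2)*(2*s/x))*(2*R-2) := by
  have key : 4*(R-1)*(c*(2*s/x) - c^2*(2*s/x)^2)/x^2 + R*(c*(2*s/x)^3)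
      - (2*s*c*(2*s/x)^2/x + 4*(c^2*((c/2 - s/x)/x^2)*(2*s/x))*(2*R-2))
      = (-4*(R-1)*c*(2*s/x)/x^2) * (c^2 - (s^2+1)) := by
    field_simp
    ring
  have h0 : c^2 - (s^2+1) = 0 := by rw [hcs]; ring
  rw [h0, mul_zero] at key
  linarith

private lemma key_identity' (i j : ℕ) (hi : 1 ≤ i) (hj : 1 ≤ j) {t : ℝ} (ht : 0 < t) :
    4*((i:ℝ)+j-1)*(fgen (i+j-1) t - fgen i t * fgen j t)/t + ((i:ℝ)+j) * fgen (i+j) t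
      = 4 * (fder i t * fgen j t + fgen i t * fder j t) := by
  obtain ⟨i', rfl⟩ : ∃ i', i = i'+1 := ⟨i-1, by omega⟩
  obtain ⟨j', rfl⟩ : ∃ j', j = j'+1 := ⟨j-1, by omega⟩
  have h1 : i'+1+(j'+1)-1 = i'+j'+1 := by omega
  have h2 : i'+1+(j'+1) = i'+j'+2 := by omega
  rw [h1, h2]
  unfold fgen fder
  set x := Real.sqrt t with hxdef
  have hx : 0 < x := Real.sqrt_pos.mpr ht
  have hx2 : x^2 = t := Real.sq_sqrt ht.le
  set c := Real.cosh (x/2) with hcdef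
  set s := Real.sinh (x/2) with hsdef
  have hcs : c^2 = s^2 + 1 := Real.cosh_sq (x/2)
  rw [show 2*(i'+1)-1 = 2*i'+1 from by omega,
      show 2*(j'+1)-1 = 2*j'+1 from by omega,
      show 2*i'+1-1 = 2*i' from by omega, show 2*j'+1-1 = 2*j' from by omega,
      show 2*(i'+j'+1)-1 = 2*i'+2*j'+1 from by omega,
      show 2*(i'+j'+2)-1 = 2*i'+2*j'+3 from by omega]
  rw [← hx2]
  have p1 : (2*s/x)^(2*i'+1) = (2*s/x)^(2*i') * (2*s/x) := pow_succ _ _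
  have p2 : (2*s/x)^(2*j'+1) = (2*s/x)^(2*j') * (2*s/x) := pow_succ _ _
  have p3 : (2*s/x)^(2*i'+2*j'+1) = (2*s/x)^(2*i') * (2*s/x)^(2*j') * (2*s/x) := by
    rw [show 2*i'+2*j'+1 = 2*i'+(2*j'+1) from by ring, pow_add, pow_succ, ← mul_assoc]
  have p4 : (2*s/x)^(2*i'+2*j'+3) = (2*s/x)^(2*i') * (2*s/x)^(2*j') * (2*s/x)^3 := by
    rw [show 2*i'+2*j'+3 = 2*i'+(2*j'+3) from by ring, pow_add, pow_add, ← mul_assoc]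
  have hE : (2 * (c * (1 / (2 * x) / 2)) * x - 2 * s * (1 / (2 * x))) = c/2 - s/x := by
    field_simp
  rw [p1, p2, p3, p4, hE]
  set A := (2*s/x)^(2*i') with hAdef
  set Bb := (2*s/x)^(2*j') with hBdef
  push_cast
  linear_combination (A*Bb) * scalar_id' ((i':ℝ)+j'+2) x c s hx.ne' hcs

private lemma tendsto_fgen_one' (i : ℕ) : Tendsto (fgen i) (𝓝[>] (0:ℝ)) (𝓝 1) := by
  have hsqrt : Tendsto (fun t : ℝ => Real.sqrt t / 2) (𝓝[>] (0:ℝ)) (𝓝[>] 0) := by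
    apply tendsto_nhdsWithin_of_tendsto_nhds_of_eventually_within
    · have : Tendsto Real.sqrt (𝓝[>] (0:ℝ)) (𝓝 0) := by
        simpa using (Real.continuous_sqrt.continuousAt (x := 0)).continuousWithinAt.tendsto
      simpa using this.div_const 2
    · filter_upwards [self_mem_nhdsWithin] with t ht
      exact div_pos (Real.sqrt_pos.mpr ht) (by norm_num)
  have hslope : Tendsto (fun u : ℝ => Real.sinh u / u) (𝓝[>] (0:ℝ)) (𝓝 1) := by
    have h := (Real.hasDerivAt_sinh 0)
    rw [hasDerivAt_iff_tendsto_slope] at h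
    have h2 : Tendsto (slope Real.sinh 0) (𝓝[>] (0:ℝ)) (𝓝 (Real.cosh 0)) :=
      h.mono_left (nhdsWithin_mono _ (fun x hx => ne_of_gt hx))
    simp only [Real.cosh_zero] at h2
    apply h2.congr'
    filter_upwards [self_mem_nhdsWithin] with u hu
    simp [slope, Real.sinh_zero, div_eq_inv_mul]
  have hbase : Tendsto (fun t : ℝ => 2 * Real.sinh (Real.sqrt t / 2) / Real.sqrt t)
      (𝓝[>] (0:ℝ)) (𝓝 1) := by
    have := hslope.comp hsqrt
    apply this.congr'
    filter_upwards [self_mem_nhdsWithin] with t ht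
    have hs : Real.sqrt t ≠ 0 := ne_of_gt (Real.sqrt_pos.mpr ht)
    simp only [Function.comp_apply]
    rw [div_div_eq_mul_div]; ring
  have hcosh : Tendsto (fun t : ℝ => Real.cosh (Real.sqrt t / 2)) (𝓝[>] (0:ℝ)) (𝓝 1) := by
    have hc : Tendsto Real.cosh (𝓝 (0:ℝ)) (𝓝 1) := by
      have := (Real.continuous_cosh.continuousAt (x := 0))
      unfold ContinuousAt at this
      simpa [Real.cosh_zero] using this
    exact hc.comp (hsqrt.mono_right nhdsWithin_le_nhds)
  have := hcosh.mul (hbase.pow (2*i-1))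
  rw [one_pow, mul_one] at this; exact this

private lemma aux_div' (M ρ r : ℝ) (hρ : ρ ≠ 0) (K : ℕ) :
    M/ρ^(K+1) * (((K:ℝ)+1) * r^K) = M/ρ * (((K:ℝ)+1) * (r/ρ)^K) := by
  simp only [div_eq_mul_inv, mul_inv, inv_pow, mul_pow, pow_succ]
  ring

private lemma shift_series' (f : ℕ → ℝ) {t : ℝ} (ht : t ≠ 0) {S : ℝ}
    (h : HasSum (fun k => f k * t ^ k) S) :
    HasSum (fun k => f (k+1) * t ^ k) ((S - f 0) * t⁻¹) := by
  have h1 : HasSum (fun k => f (k+1) * t ^ (k+1)) (S - f 0) := by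
    have := (hasSum_nat_add_iff' 1).mpr h
    simpa using this
  have h2 := h1.mul_right t⁻¹
  simpa [pow_succ, mul_assoc, mul_inv_cancel₀ ht] using h2

/-- the Taylor coefficients `B^i_{i+α}` of `f^i` satisfy `B^i_i = 1` and the
recursion `4(i+j-1) B^{i+j-1}_m + (i+j) B^{i+j}_m = 4m Σ_{α+β=m+1} B^i_α B^j_β`. -/
theorem stmt1 (B : ℕ → ℕ → ℝ)
    (hsum : ∀ i, 1 ≤ i → ∀ t : ℝ, 0 < t → t < 1 →
      HasSum (fun α : ℕ => B i (i + α) * t ^ α) (fgen i t))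
    (hzero : ∀ i α, α < i → B i α = 0) :
    (∀ i, 1 ≤ i → B i i = 1) ∧
    (∀ i j m : ℕ, 1 ≤ i → 1 ≤ j → i + j ≤ m →
      4 * ((i : ℝ) + j - 1) * B (i + j - 1) m + ((i : ℝ) + j) * B (i + j) m
        = 4 * m * ∑ p ∈ Finset.HasAntidiagonal.antidiagonal (m + 1), B i p.1 * B j p.2) := by
  have part1 : ∀ i, 1 ≤ i → B i i = 1 := by
    intro i hi
    have hL := L0' (fun k => B i (i+k)) (fgen i) (fun t ht0 ht1 => hsum i hi t ht0 ht1)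
    have hT := tendsto_fgen_one' i
    have h := tendsto_nhds_unique hL hT
    simpa using h
  refine ⟨part1, ?_⟩
  intro i j m hi hj hm
  set n := i + j with hn
  have hn1 : 1 ≤ n - 1 := by omega
  have hnn : 1 ≤ n := by omega
  set bb : ℕ → ℕ → ℝ := fun l k => B l (l + k) with hbb
  set cc : ℕ → ℝ := fun m' => ∑ p ∈ Finset.HasAntidiagonal.antidiagonal m', bb i p.1 * bb j p.2 with hcc
  have hbi0 : bb i 0 = 1 := by simp only [hbb]; simpa using part1 i hi
  have hbj0 : bb j 0 = 1 := by simp only [hbb]; simpa using part1 j hj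
  have hb10 : bb (n-1) 0 = 1 := by simp only [hbb]; simpa using part1 (n-1) hn1
  have hcc0 : cc 0 = 1 := by
    simp only [hcc, Finset.Nat.antidiagonal_zero, Finset.sum_singleton, hbi0, hbj0, mul_one]
  have SC : ∀ y : ℝ, 0 < y → y < 1 →
      HasSum (fun m' => cc m' * y ^ m') (fgen i y * fgen j y) := by
    intro y hy0 hy1
    have Hi : HasSum (fun k => bb i k * y ^ k) (fgen i y) := hsum i hi y hy0 hy1
    have Hj : HasSum (fun k => bb j k * y ^ k) (fgen j y) := hsum j hj y hy0 hy1
    have hfabs : Summable (fun k => ‖bb i k * y ^ k‖) := by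
      simpa only [Real.norm_eq_abs] using summable_abs_iff.mpr Hi.summable
    have hgabs : Summable (fun k => ‖bb j k * y ^ k‖) := by
      simpa only [Real.norm_eq_abs] using summable_abs_iff.mpr Hj.summable
    have hsum_eq : ∀ m' : ℕ,
        (∑ p ∈ Finset.HasAntidiagonal.antidiagonal m', (bb i p.1 * y ^ p.1) * (bb j p.2 * y ^ p.2))
          = cc m' * y ^ m' := by
      intro m'
      simp only [hcc]
      rw [Finset.sum_mul]
      apply Finset.sum_congr rfl
      intro p hp
      have hpm := Finset.HasAntidiagonal.mem_antidiagonal.mp hp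
      rw [← hpm, pow_add]; ring
    have hprod : Summable (fun m' => ∑ p ∈ Finset.HasAntidiagonal.antidiagonal m',
        (bb i p.1 * y ^ p.1) * (bb j p.2 * y ^ p.2)) :=
      (summable_norm_sum_mul_antidiagonal_of_summable_norm hfabs hgabs).of_norm
    have htsum := tsum_mul_tsum_eq_tsum_sum_antidiagonal_of_summable_norm hfabs hgabs
    have hps : Summable (fun m' => cc m' * y ^ m') := by
      apply hprod.congr; intro m'; exact hsum_eq m'
    have hhs := hps.hasSum
    have heq : (∑' m', cc m' * y ^ m') = fgen i y * fgen j y := by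
      rw [← Hi.tsum_eq, ← Hj.tsum_eq, htsum]
      exact (tsum_congr hsum_eq).symm
    rwa [heq] at hhs
  have key : ∀ k : ℕ, 4*((n:ℝ)-1) * bb (n-1) (k+1) + (n:ℝ) * bb n k
      - 4*((k:ℝ)+(n:ℝ)) * cc (k+1) = 0 := by
    apply LA'
    intro t ht0 ht1
    have Hn1 : HasSum (fun k => bb (n-1) k * t ^ k) (fgen (n-1) t) := hsum (n-1) hn1 t ht0 ht1
    have Hnn : HasSum (fun k => bb n k * t ^ k) (fgen n t) := hsum n hnn t ht0 ht1
    have htne : t ≠ 0 := ne_of_gt ht0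
    have S1 : HasSum (fun k => bb (n-1) (k+1) * t ^ k) ((fgen (n-1) t - 1) * t⁻¹) := by
      have h := shift_series' (bb (n-1)) htne Hn1
      rwa [hb10] at h
    have S4 : HasSum (fun k => cc (k+1) * t ^ k) ((fgen i t * fgen j t - 1) * t⁻¹) := by
      have h := shift_series' cc htne (SC t ht0 ht1)
      rwa [hcc0] at h
    -- term-by-term derivative of the product series
    set r : ℝ := (1+t)/2 with hr
    set ρ : ℝ := (3+t)/4 with hρ
    have htr : t < r := by rw [hr]; linarith
    have hrρ : r < ρ := by rw [hr, hρ]; linarith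
    have hρ1 : ρ < 1 := by rw [hρ]; linarith
    have hρ0 : (0:ℝ) < ρ := by rw [hρ]; linarith
    have hr0 : (0:ℝ) < r := by rw [hr]; linarith
    have hq1 : r/ρ < 1 := (div_lt_one hρ0).mpr hrρ
    have hq0 : (0:ℝ) < r/ρ := div_pos hr0 hρ0
    have ccρ : Summable (fun k => |cc k| * ρ^k) := by
      have h1 := (SC ρ hρ0 hρ1).summable
      have h2 := summable_abs_iff.mpr h1
      apply h2.congr
      intro k
      rw [abs_mul, abs_pow, abs_of_pos hρ0]
    set M := ∑' k, |cc k| * ρ^k with hM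
    have hM0 : 0 ≤ M := tsum_nonneg fun k => by positivity
    have hMk : ∀ k, |cc k| * ρ^k ≤ M := fun k => Summable.le_tsum ccρ k (fun _ _ => by positivity)
    set u : ℕ → ℝ := fun k => M/ρ * ((k:ℝ) * (r/ρ)^(k-1)) with hu
    have hu_sum : Summable u := by
      have h1 : Summable (fun k : ℕ => (k:ℝ) * (r/ρ)^k) := by
        have := summable_pow_mul_geometric_of_norm_lt_one (k := 1)
          (show ‖r/ρ‖ < 1 by rw [Real.norm_eq_abs, abs_of_pos hq0]; exact hq1)
        simpa using this
      have h2 : Summable (fun k : ℕ => (r/ρ)^k) := summable_geometric_of_lt_one hq0.le hq1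
      have h3 : Summable (fun k : ℕ => ((k:ℝ)+1) * (r/ρ)^k) := by
        apply (h1.add h2).congr; intro k; ring
      have h4 : Summable (fun k : ℕ => (k:ℝ) * (r/ρ)^(k-1)) := by
        apply (summable_nat_add_iff 1).mp
        apply h3.congr
        intro k
        push_cast
        norm_num
      exact h4.mul_left _
    have hbound : ∀ (k : ℕ) (y : ℝ), y ∈ Set.Ioo (0:ℝ) r →
        ‖cc k * ((k:ℝ) * y^(k-1))‖ ≤ u k := by
      intro k y hy
      rw [Real.norm_eq_abs, abs_mul, abs_mul, abs_pow, Nat.abs_cast]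
      match k with
      | 0 => simp [hu]
      | (k'+1) =>
        have hccle : |cc (k'+1)| ≤ M / ρ^(k'+1) := by
          rw [le_div_iff₀ (pow_pos hρ0 _)]; exact hMk _
        have hyr : |y| ≤ r := by rw [abs_of_pos hy.1]; exact hy.2.le
        have hpow : |y|^(k'+1-1) ≤ r^k' := by
          simpa using pow_le_pow_left₀ (abs_nonneg y) hyr k'
        calc |cc (k'+1)| * (((k'+1:ℕ):ℝ) * |y|^(k'+1-1))
            ≤ (M/ρ^(k'+1)) * (((k'+1:ℕ):ℝ) * r^k') := by
              apply mul_le_mul hccle (mul_le_mul_of_nonneg_left hpow (by positivity))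
                (by positivity) (by positivity)
          _ = u (k'+1) := by
              simp only [hu, Nat.add_sub_cancel]
              push_cast
              exact aux_div' M ρ r hρ0.ne' k'
    have hderiv_term : ∀ (k : ℕ) (y : ℝ), y ∈ Set.Ioo (0:ℝ) r →
        HasDerivAt (fun z : ℝ => cc k * z^k) (cc k * ((k:ℝ) * y^(k-1))) y :=
      fun k y _ => (hasDerivAt_pow k y).const_mul (cc k)
    have hg0 : Summable (fun k => cc k * t^k) := (SC t ht0 ht1).summable
    have hDer1 : HasDerivAt (fun z : ℝ => ∑' k, cc k * z^k)
        (∑' k, cc k * ((k:ℝ) * t^(k-1))) t :=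
      hasDerivAt_tsum_of_isPreconnected hu_sum isOpen_Ioo isPreconnected_Ioo
        hderiv_term hbound ⟨ht0, htr⟩ hg0 ⟨ht0, htr⟩
    set D := ∑' k, cc k * ((k:ℝ) * t^(k-1)) with hD
    have hDsummable : Summable (fun k => cc k * ((k:ℝ) * t^(k-1))) :=
      Summable.of_norm_bounded hu_sum (fun k => hbound k t ⟨ht0, htr⟩)
    have hDhasSum : HasSum (fun k => cc k * ((k:ℝ) * t^(k-1))) D := hDsummable.hasSum
    have hD' : HasSum (fun k => cc (k+1) * (((k:ℝ)+1) * t^k)) D := by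
      have h := (hasSum_nat_add_iff' 1).mpr hDhasSum
      simpa using h
    have heqF : (fun z : ℝ => ∑' k, cc k * z^k) =ᶠ[𝓝 t] (fun z => fgen i z * fgen j z) := by
      filter_upwards [Ioo_mem_nhds ht0 ht1] with z hz
      exact (SC z hz.1 hz.2).tsum_eq
    have hDer2 : HasDerivAt (fun z : ℝ => fgen i z * fgen j z) D t :=
      hDer1.congr_of_eventuallyEq heqF.symm
    have hDer3 : HasDerivAt (fun z : ℝ => fgen i z * fgen j z)
        (fder i t * fgen j t + fgen i t * fder j t) t :=
      (hasDerivAt_fgen' i ht0).mul (hasDerivAt_fgen' j ht0)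
    have hDval : D = fder i t * fgen j t + fgen i t * fder j t := hDer2.unique hDer3
    -- combine
    have Total := ((S1.mul_left (4*((n:ℝ)-1))).add (Hnn.mul_left (n:ℝ))).sub
      ((hD'.mul_left 4).add (S4.mul_left (4*((n:ℝ)-1))))
    have hfun : (fun k => 4*((n:ℝ)-1) * (bb (n-1) (k+1) * t^k) + (n:ℝ) * (bb n k * t^k)
        - (4 * (cc (k+1) * (((k:ℝ)+1) * t^k)) + 4*((n:ℝ)-1) * (cc (k+1) * t^k)))
        = fun k => (4*((n:ℝ)-1) * bb (n-1) (k+1) + (n:ℝ) * bb n k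
          - 4*((k:ℝ)+(n:ℝ)) * cc (k+1)) * t^k := by
      funext k; ring
    rw [hfun] at Total
    have hV : 4*((n:ℝ)-1) * ((fgen (n-1) t - 1) * t⁻¹) + (n:ℝ) * fgen n t
        - (4 * D + 4*((n:ℝ)-1) * ((fgen i t * fgen j t - 1) * t⁻¹)) = 0 := by
      rw [hDval]
      have KI := key_identity' i j hi hj ht0
      have hcast : ((n:ℝ)) = (i:ℝ) + j := by rw [hn]; push_cast; ring
      rw [← hn] at KI
      rw [← hcast] at KI
      linear_combination KI
    rwa [hV] at Total
  -- conclude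
  obtain ⟨k, hk⟩ : ∃ k, m = n + k := ⟨m - n, by omega⟩
  have ek := key k
  simp only [hbb] at ek
  rw [show (n-1) + (k+1) = m from by omega, show n + k = m from by omega] at ek
  have hkn : ((k:ℝ) + (n:ℝ)) = (m:ℝ) := by
    have h : k + n = m := by omega
    exact_mod_cast congrArg (Nat.cast : ℕ → ℝ) h
  rw [hkn] at ek
  have hre : cc (k+1) = ∑ p ∈ Finset.HasAntidiagonal.antidiagonal (m+1), B i p.1 * B j p.2 := by
    simp only [hcc, hbb]
    symm
    rw [← Finset.sum_filter_of_ne (p := fun p : ℕ×ℕ => i ≤ p.1 ∧ j ≤ p.2) ?hne]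
    case hne =>
      intro p hp hne
      constructor
      · by_contra hlt; push_neg at hlt; exact hne (by rw [hzero i p.1 hlt, zero_mul])
      · by_contra hlt; push_neg at hlt; exact hne (by rw [hzero j p.2 hlt, mul_zero])
    apply Finset.sum_nbij' (i := fun p : ℕ×ℕ => (p.1 - i, p.2 - j))
      (j := fun q : ℕ×ℕ => (i + q.1, j + q.2))
    · intro p hp
      simp only [Finset.mem_filter, Finset.HasAntidiagonal.mem_antidiagonal] at hp ⊢
      omega
    · intro q hq
      simp only [Finset.mem_filter, Finset.HasAntidiagonal.mem_antidiagonal] at hq ⊢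
      omega
    · intro p hp
      obtain ⟨p1, p2⟩ := p
      simp only [Finset.mem_filter, Finset.HasAntidiagonal.mem_antidiagonal] at hp
      simp only [Prod.mk.injEq]
      constructor <;> omega
    · intro q hq
      obtain ⟨q1, q2⟩ := q
      simp only [Finset.HasAntidiagonal.mem_antidiagonal] at hq
      simp only [Prod.mk.injEq]
      constructor <;> omega
    · intro p hp
      simp only [Finset.mem_filter, Finset.HasAntidiagonal.mem_antidiagonal] at hp
      have h1 : i + (p.1 - i) = p.1 := by omega
      have h2 : j + (p.2 - j) = p.2 := by omega
      rw [h1, h2]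
  rw [hre] at ek
  have hcast2 : ((n:ℝ)) = (i:ℝ) + (j:ℝ) := by rw [hn]; push_cast; ring
  rw [← hcast2]
  linarith [ek]
end

section
/- Let k ≥ 1, and consider the system ∂_m Ψ = Ψ B_m for m ranging over a finite index set, where the entries of the matrices B_m are polynomials in variables w^{k+1},…,w^l, each assigned a positive rational weight (deg w^j > 0), and each entry of B_m is weighted homogeneous of the appropriate degree. If the system is compatible (∂_m(Ψ B_n) = ∂_n(Ψ B_m)), then there exists a unique solution Ψ analytic at w = 0 with Ψ|_{w=0} = Id, and the entries of Ψ are weighted homogeneous polynomials in w^{k+1},…,w^l. -/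
/-!
Contracting the system with the Euler field `E = ∑ w^m ∂_m` gives the radial equation
`E Ψ = Ψ A` with `A = ∑ w^m B_m`. As `A` has no constant term, in standard degree `r` this reads
`r Ψ_r = (Ψ A)_r`, whose right side only involves `Ψ_0, …, Ψ_{r-1}`: so `Ψ_0 = Id` determines `Ψ`,
and `Ψ` can be built degree by degree. The layers inherit from `A` weighted homogeneity of degree
`ε_j - ε_s`; since all weights are positive, bounded weighted degree forces bounded standard
degree, so the recursion stops and `Ψ` is a polynomial. Compatibility makes the radial solution
solve each equation: the defects `H_m = ∂_m Ψ - Ψ B_m` satisfy `∑ w^m H_m = 0` and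
`∂_n H_m - ∂_m H_n = H_m B_n - H_n B_m`, hence `E H_m + H_m = H_m A`, which forces `H_m = 0`
degree by degree.
-/

open MvPolynomial Finset

theorem Finsupp.exists_forall_degree_lt_of_weight_le {σ M : Type*} [Finite σ] [AddCommGroup M]
    [LinearOrder M] [IsOrderedAddMonoid M] [Archimedean M] {w : σ → M} (hw : ∀ i, 0 < w i)
    (E : M) : ∃ N : ℕ, ∀ b : σ →₀ ℕ, weight w b ≤ E → b.degree < N := by
  have := Fintype.ofFinite σ
  rcases isEmpty_or_nonempty σ with hσ | hσ
  · exact ⟨1, fun b _ => by simp [Subsingleton.elim b 0]⟩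
  set q := univ.inf' univ_nonempty w
  have hq : 0 < q := (lt_inf'_iff _).2 fun i _ => hw i
  obtain ⟨N, hN⟩ := Archimedean.arch E hq
  refine ⟨N + 1, fun b hb => Nat.lt_succ_of_le ((nsmul_le_nsmul_iff_left hq).1 ?_)⟩
  calc b.degree • q = ∑ i, b i • q := by rw [degree_eq_sum, Finset.sum_smul]
    _ ≤ ∑ i, b i • w i :=
      Finset.sum_le_sum fun i _ => nsmul_le_nsmul_right (inf'_le w (mem_univ i)) _
    _ = weight w b := (weight_eq_sum w b).symm
    _ ≤ N • q := hb.trans hN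

namespace MvPolynomial

variable {σ R M : Type*}

theorem pderiv_pderiv_comm [CommRing R] (i j : σ) (p : MvPolynomial σ R) :
    pderiv i (pderiv j p) = pderiv j (pderiv i p) := by
  classical
  have h : ⁅pderiv i, pderiv j⁆ = (0 : Derivation R (MvPolynomial σ R) (MvPolynomial σ R)) :=
    derivation_ext fun k => by
      rw [Derivation.commutator_apply, pderiv_X, pderiv_X]
      simp [Pi.single_apply, apply_ite]
  simpa [Derivation.commutator_apply, sub_eq_zero] using congr($h p)

variable [CommSemiring R]

theorem homogeneousComponent_mul (n : ℕ) (p q : MvPolynomial σ R) :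
    homogeneousComponent n (p * q) =
      ∑ x ∈ antidiagonal n, homogeneousComponent x.1 p * homogeneousComponent x.2 q := by
  classical
  let _ := gradedAlgebra (σ := σ) (R := R)
  have h (r : MvPolynomial σ R) (m : ℕ) :
      homogeneousComponent m r = DirectSum.decompose (homogeneousSubmodule σ R) r m :=
    (decomposition.decompose'_apply r m).symm
  simp only [h, DirectSum.decompose_mul]
  rw [DirectSum.coe_mul_apply_eq_sum_antidiagonal]

theorem homogeneousComponent_homogeneousComponent (m n : ℕ) (p : MvPolynomial σ R) :
    homogeneousComponent m (homogeneousComponent n p) =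
      if m = n then homogeneousComponent n p else 0 :=
  homogeneousComponent_of_mem (homogeneousComponent_mem n p)

theorem homogeneousComponent_sum_X_mul_pderiv [Fintype σ] (n : ℕ) (p : MvPolynomial σ R) :
    homogeneousComponent n (∑ i, X i * pderiv i p) = n • homogeneousComponent n p := by
  induction p using MvPolynomial.induction_on' with
  | monomial a x =>
    simp only [X_mul_pderiv_monomial, ← Finset.sum_smul, ← Finsupp.degree_eq_sum, map_nsmul,
      homogeneousComponent_of_mem (isHomogeneous_monomial x (rfl : a.degree = a.degree))]
    split_ifs with h
    · rw [h]
    · simp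
  | add p q hp hq => simp only [map_add, mul_add, sum_add_distrib, hp, hq, smul_add]

variable [AddCommMonoid M]

theorem IsWeightedHomogeneous.homogeneousComponent {w : σ → M} {p : MvPolynomial σ R} {δ : M}
    (hp : p.IsWeightedHomogeneous w δ) (n : ℕ) :
    (homogeneousComponent n p).IsWeightedHomogeneous w δ := by
  intro b hb
  rw [coeff_homogeneousComponent] at hb
  split_ifs at hb
  · exact hp hb
  · exact (hb rfl).elim

theorem IsWeightedHomogeneous.homogeneousComponent_eq_zero {w : σ → M} {p : MvPolynomial σ R}
    {δ : M} (hp : p.IsWeightedHomogeneous w δ) {n : ℕ}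
    (hn : ∀ b : σ →₀ ℕ, Finsupp.weight w b = δ → b.degree ≠ n) :
    MvPolynomial.homogeneousComponent n p = 0 := by
  ext b
  rw [coeff_homogeneousComponent, coeff_zero]
  split_ifs with hb
  · by_contra h
    exact hn b (hp h) hb
  · rfl

end MvPolynomial

namespace Matrix

variable {σ R ι κ μ : Type*}

section CommSemiring

variable [CommSemiring R]

noncomputable def partialDeriv (i : σ) :
    Matrix ι κ (MvPolynomial σ R) →ₗ[R] Matrix ι κ (MvPolynomial σ R) :=
  (pderiv i).toLinearMap.mapMatrix

noncomputable def homComponent (n : ℕ) :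
    Matrix ι κ (MvPolynomial σ R) →ₗ[R] Matrix ι κ (MvPolynomial σ R) :=
  (homogeneousComponent n).mapMatrix

noncomputable def radial [Fintype σ] (B : σ → Matrix ι κ (MvPolynomial σ R)) :
    Matrix ι κ (MvPolynomial σ R) :=
  ∑ i, (X i : MvPolynomial σ R) • B i

noncomputable def euler [Fintype σ] (M : Matrix ι κ (MvPolynomial σ R)) :
    Matrix ι κ (MvPolynomial σ R) :=
  radial fun i => partialDeriv i M

@[simp]
theorem partialDeriv_apply (i : σ) (M : Matrix ι κ (MvPolynomial σ R)) (s : ι) (j : κ) :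
    partialDeriv i M s j = pderiv i (M s j) := rfl

@[simp]
theorem homComponent_apply (n : ℕ) (M : Matrix ι κ (MvPolynomial σ R)) (s : ι) (j : κ) :
    homComponent n M s j = homogeneousComponent n (M s j) := rfl

theorem partialDeriv_mul [Fintype κ] (i : σ) (M : Matrix ι κ (MvPolynomial σ R))
    (N : Matrix κ μ (MvPolynomial σ R)) :
    partialDeriv i (M * N) = partialDeriv i M * N + M * partialDeriv i N := by
  ext s j : 1
  simp only [partialDeriv_apply, mul_apply, add_apply, map_sum, pderiv_mul, sum_add_distrib]

section Radial

variable [Fintype σ]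

theorem mul_radial [Fintype κ] (M : Matrix ι κ (MvPolynomial σ R))
    (B : σ → Matrix κ μ (MvPolynomial σ R)) : M * radial B = radial fun i => M * B i := by
  simp only [radial, Matrix.mul_sum, Matrix.mul_smul]

theorem radial_mul [Fintype κ] (B : σ → Matrix ι κ (MvPolynomial σ R))
    (M : Matrix κ μ (MvPolynomial σ R)) : radial B * M = radial fun i => B i * M := by
  simp only [radial, Matrix.sum_mul, Matrix.smul_mul]

theorem partialDeriv_radial (i : σ) (B : σ → Matrix ι κ (MvPolynomial σ R)) :
    partialDeriv i (radial B) = B i + radial fun j => partialDeriv i (B j) := by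
  classical
  ext s j : 1
  simp [radial, sum_apply, pderiv_X, Pi.single_apply, sum_add_distrib, add_comm]

theorem homComponent_zero_radial (B : σ → Matrix ι κ (MvPolynomial σ R)) :
    homComponent 0 (radial B) = 0 := by
  ext s j : 1
  simp [radial, sum_apply, homogeneousComponent_zero, ← constantCoeff_eq]

theorem euler_eq_mul_radial [Fintype κ] {B : σ → Matrix κ κ (MvPolynomial σ R)}
    {Ψ : Matrix ι κ (MvPolynomial σ R)} (h : ∀ i, partialDeriv i Ψ = Ψ * B i) :
    euler Ψ = Ψ * radial B := by
  simp only [euler, h, mul_radial]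

end Radial

theorem ext_homComponent {M N : Matrix ι κ (MvPolynomial σ R)}
    (h : ∀ n, homComponent n M = homComponent n N) : M = N := by
  ext s j b
  simpa [coeff_homogeneousComponent] using congr(coeff b ($(h b.degree) s j))

theorem homComponent_mul [Fintype κ] (n : ℕ) (M : Matrix ι κ (MvPolynomial σ R))
    (N : Matrix κ μ (MvPolynomial σ R)) :
    homComponent n (M * N) = ∑ x ∈ antidiagonal n, homComponent x.1 M * homComponent x.2 N := by
  ext s j : 1
  simp only [homComponent_apply, mul_apply, sum_apply, map_sum, homogeneousComponent_mul]
  exact sum_comm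

theorem homComponent_homComponent (m n : ℕ) (M : Matrix ι κ (MvPolynomial σ R)) :
    homComponent m (homComponent n M) = if m = n then homComponent n M else 0 := by
  ext s j : 1
  simp only [homComponent_apply, homogeneousComponent_homogeneousComponent]
  split_ifs <;> rfl

theorem homComponent_one [DecidableEq ι] (n : ℕ) :
    homComponent n (1 : Matrix ι ι (MvPolynomial σ R)) = if n = 0 then 1 else 0 := by
  ext s j : 1
  rw [homComponent_apply, homogeneousComponent_of_mem (n := 0)]
  · split_ifs <;> rfl
  · rw [one_apply]
    split_ifs
    exacts [isHomogeneous_one σ R, isHomogeneous_zero σ R 0]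

theorem homComponent_homComponent_mul_eq_zero [Fintype κ] {A : Matrix κ κ (MvPolynomial σ R)}
    (hA : homComponent 0 A = 0) {m n : ℕ} (hnm : n ≤ m) (M : Matrix ι κ (MvPolynomial σ R)) :
    homComponent n (homComponent m M * A) = 0 := by
  rw [homComponent_mul]
  refine sum_eq_zero fun x hx => ?_
  rw [homComponent_homComponent]
  split_ifs with h
  · have hx2 : x.2 = 0 := by rw [Finset.HasAntidiagonal.mem_antidiagonal] at hx; omega
    rw [hx2, hA, Matrix.mul_zero]
  · rw [Matrix.zero_mul]

theorem homComponent_euler [Fintype σ] (n : ℕ) (M : Matrix ι κ (MvPolynomial σ R)) :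
    homComponent n (euler M) = n • homComponent n M := by
  ext s j : 1
  simpa [euler, radial, sum_apply] using homogeneousComponent_sum_X_mul_pderiv n (M s j)

theorem homComponent_zero_eq_one_iff [DecidableEq ι] {M : Matrix ι ι (MvPolynomial σ R)} :
    homComponent 0 M = 1 ↔ M.map constantCoeff = 1 := by
  have h : homComponent 0 M = (M.map constantCoeff).map C := by
    ext s j : 1
    simp [homogeneousComponent_zero, constantCoeff_eq]
  rw [h, ← Matrix.map_one C (map_zero C) (map_one C), (map_injective (C_injective σ R)).eq_iff]

section Weighted

variable {M : Type*} [Fintype ι] [DecidableEq ι] [AddCommGroup M] {w : σ → M} {ε : ι → M}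

variable (R) in
def weightedHomogeneousSubalgebra (w : σ → M) (ε : ι → M) :
    Subalgebra R (Matrix ι ι (MvPolynomial σ R)) where
  carrier := {A | ∀ s j, (A s j).IsWeightedHomogeneous w (ε j - ε s)}
  mul_mem' {A B} hA hB s j := (weightedHomogeneousSubmodule R w _).sum_mem fun t _ => by
    simpa using (hA s t).mul (hB t j)
  add_mem' hA hB s j := (hA s j).add (hB s j)
  algebraMap_mem' r s j := by
    rw [algebraMap_matrix_apply]
    split_ifs with h
    · simpa [h] using isWeightedHomogeneous_C w r
    · exact isWeightedHomogeneous_zero R w _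

theorem homComponent_mem {A : Matrix ι ι (MvPolynomial σ R)}
    (hA : A ∈ weightedHomogeneousSubalgebra R w ε) (n : ℕ) :
    homComponent n A ∈ weightedHomogeneousSubalgebra R w ε :=
  fun s j => (hA s j).homogeneousComponent n

theorem radial_mem [Fintype σ] {B : σ → Matrix ι ι (MvPolynomial σ R)}
    (hB : ∀ i s j, (B i s j).IsWeightedHomogeneous w (ε j - ε s - w i)) :
    radial B ∈ weightedHomogeneousSubalgebra R w ε :=
  Subalgebra.sum_mem _ fun i _ s j => by
    simpa using (isWeightedHomogeneous_X R w i).mul (hB i s j)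

theorem exists_homComponent_eq_zero_of_mem [Finite σ] [LinearOrder M] [IsOrderedAddMonoid M]
    [Archimedean M] (hw : ∀ i, 0 < w i) :
    ∃ N : ℕ, ∀ n, N ≤ n → ∀ A ∈ weightedHomogeneousSubalgebra R w ε,
      homComponent n A = 0 := by
  obtain ⟨E, hE⟩ := (Set.finite_range fun x : ι × ι => ε x.2 - ε x.1).bddAbove
  obtain ⟨N, hN⟩ := Finsupp.exists_forall_degree_lt_of_weight_le hw E
  refine ⟨N, fun n hn A hA => ?_⟩
  ext s j : 1
  exact (hA s j).homogeneousComponent_eq_zero fun b hb =>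
    (lt_of_lt_of_le (hN b (hb ▸ hE ⟨(s, j), rfl⟩)) hn).ne

end Weighted

end CommSemiring

section CommRing

variable [CommRing R]

theorem partialDeriv_comm (i j : σ) (M : Matrix ι κ (MvPolynomial σ R)) :
    partialDeriv i (partialDeriv j M) = partialDeriv j (partialDeriv i M) := by
  ext s t : 1
  exact pderiv_pderiv_comm i j (M s t)

theorem partialDeriv_partialDeriv_sub_mul_comm [Fintype κ]
    {B : σ → Matrix κ κ (MvPolynomial σ R)}
    (hcompat : ∀ i j, partialDeriv i (B j) + B i * B j = partialDeriv j (B i) + B j * B i)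
    (Ψ : Matrix ι κ (MvPolynomial σ R)) (i j : σ) :
    partialDeriv j (partialDeriv i Ψ - Ψ * B i) =
      partialDeriv i (partialDeriv j Ψ - Ψ * B j) + (partialDeriv i Ψ - Ψ * B i) * B j -
        (partialDeriv j Ψ - Ψ * B j) * B i := by
  have h : Ψ * partialDeriv i (B j) =
      Ψ * partialDeriv j (B i) + Ψ * (B j * B i) - Ψ * (B i * B j) := by
    rw [eq_sub_iff_add_eq, ← Matrix.mul_add, ← Matrix.mul_add, hcompat]
  simp only [map_sub, partialDeriv_mul, partialDeriv_comm i j, Matrix.sub_mul, Matrix.mul_assoc, h]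
  abel

theorem radial_sub [Fintype σ] (B B' : σ → Matrix ι κ (MvPolynomial σ R)) :
    radial (B - B') = radial B - radial B' := by
  simp only [radial, Pi.sub_apply, smul_sub, sum_sub_distrib]

end CommRing

section Field

variable {K : Type*} [Field K]

section Uniqueness

variable [CharZero K] [Fintype σ] [Fintype κ]

theorem eq_zero_of_euler_add_nsmul_eq_mul {A : Matrix κ κ (MvPolynomial σ K)}
    {N : Matrix ι κ (MvPolynomial σ K)} (a : ℕ) (hA : homComponent 0 A = 0)
    (hN : euler N + a • N = N * A) (h0 : a = 0 → homComponent 0 N = 0) : N = 0 := by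
  refine ext_homComponent fun n => ?_
  induction n using Nat.strong_induction_on with
  | _ n ih =>
    have hsmul : (n + a) • homComponent n N = 0 := by
      have := congr(homComponent n $hN)
      rw [map_add, homComponent_euler, map_nsmul, ← add_smul, homComponent_mul] at this
      rw [this]
      refine sum_eq_zero fun x hx => ?_
      rw [Finset.HasAntidiagonal.mem_antidiagonal] at hx
      rcases Nat.eq_zero_or_pos x.2 with h2 | h2
      · rw [h2, hA, Matrix.mul_zero]
      · rw [ih x.1 (by omega), map_zero, Matrix.zero_mul]
    rw [map_zero]
    rcases eq_or_ne (n + a) 0 with hna | hna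
    · obtain ⟨rfl, rfl⟩ : n = 0 ∧ a = 0 := by omega
      exact h0 rfl
    · rw [← Nat.cast_smul_eq_nsmul K] at hsmul
      exact (smul_eq_zero.1 hsmul).resolve_left (Nat.cast_ne_zero.2 hna)

theorem eq_of_partialDeriv_eq_mul {B : σ → Matrix κ κ (MvPolynomial σ K)}
    {Ψ Ψ' : Matrix ι κ (MvPolynomial σ K)} (hΨ : ∀ i, partialDeriv i Ψ = Ψ * B i)
    (hΨ' : ∀ i, partialDeriv i Ψ' = Ψ' * B i) (h0 : homComponent 0 Ψ = homComponent 0 Ψ') :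
    Ψ = Ψ' := by
  have hsub : ∀ i, partialDeriv i (Ψ - Ψ') = (Ψ - Ψ') * B i := fun i => by
    rw [map_sub, hΨ, hΨ', Matrix.sub_mul]
  refine sub_eq_zero.1 (eq_zero_of_euler_add_nsmul_eq_mul 0 (homComponent_zero_radial B) ?_
    fun _ => by rw [map_sub, h0, sub_self])
  rw [zero_smul, add_zero, euler_eq_mul_radial hsub]

theorem partialDeriv_eq_mul_of_euler_eq_mul {B : σ → Matrix κ κ (MvPolynomial σ K)}
    (hcompat : ∀ i j, partialDeriv i (B j) + B i * B j = partialDeriv j (B i) + B j * B i)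
    {Ψ : Matrix ι κ (MvPolynomial σ K)} (hΨ : euler Ψ = Ψ * radial B) (i : σ) :
    partialDeriv i Ψ = Ψ * B i := by
  set H : σ → Matrix ι κ (MvPolynomial σ K) := fun j => partialDeriv j Ψ - Ψ * B j with hH
  have hradial : radial H = 0 := by
    rw [hH, ← Pi.sub_def, radial_sub, ← mul_radial, ← euler, hΨ, sub_self]
  have hHi : euler (H i) + 1 • H i = H i * radial B := by
    have hderiv : radial (fun j => partialDeriv i (H j)) = -H i := by
      have h := partialDeriv_radial i H
      rw [hradial, map_zero] at h
      exact eq_neg_of_add_eq_zero_right h.symm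
    have hmul : radial (fun j => H j * B i) = 0 := by rw [← radial_mul, hradial, Matrix.zero_mul]
    rw [euler, funext (partialDeriv_partialDeriv_sub_mul_comm hcompat Ψ i), one_smul, mul_radial]
    simp only [radial, smul_sub, smul_add, sum_add_distrib, sum_sub_distrib] at hderiv hmul ⊢
    rw [hderiv, hmul]
    abel
  exact sub_eq_zero.1 (eq_zero_of_euler_add_nsmul_eq_mul 1 (homComponent_zero_radial B) hHi
    (absurd · one_ne_zero))

end Uniqueness

section Existence

variable [Fintype κ] [DecidableEq κ] (A : Matrix κ κ (MvPolynomial σ K))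

/-- The truncation to degrees `≤ r` of the solution of `euler Ψ = Ψ * A`, `Ψ(0) = 1`: in degree
`r + 1` that equation reads `(r + 1) Ψ_{r+1} = (Ψ_{≤ r} * A)_{r+1}` when `A(0) = 0`. -/
noncomputable def partialSolution : ℕ → Matrix κ κ (MvPolynomial σ K)
  | 0 => 1
  | r + 1 => partialSolution r + ((r : K) + 1)⁻¹ • homComponent (r + 1) (partialSolution r * A)

theorem homComponent_partialSolution_of_lt {r n : ℕ} (h : r < n) :
    homComponent n (partialSolution A r) = 0 := by
  induction r with
  | zero => rw [partialSolution, homComponent_one, if_neg (by omega)]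
  | succ r ih =>
    rw [partialSolution, map_add, map_smul, homComponent_homComponent, if_neg (by omega),
      ih (by omega), smul_zero, add_zero]

theorem homComponent_zero_partialSolution (r : ℕ) :
    homComponent 0 (partialSolution A r) = 1 := by
  induction r with
  | zero => rw [partialSolution, homComponent_one, if_pos rfl]
  | succ r ih =>
    rw [partialSolution, map_add, map_smul, homComponent_homComponent, if_neg (by omega), ih,
      smul_zero, add_zero]

variable {A}

theorem nsmul_homComponent_partialSolution [CharZero K] (hA : homComponent 0 A = 0) {n r : ℕ}
    (h : n ≤ r) :
    n • homComponent n (partialSolution A r) = homComponent n (partialSolution A r * A) := by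
  induction r generalizing n with
  | zero =>
    rw [Nat.le_zero.1 h, zero_smul, partialSolution, Matrix.one_mul, hA]
  | succ r ih =>
    rw [partialSolution, Matrix.add_mul, Matrix.smul_mul, map_add, map_add, map_smul, map_smul,
      homComponent_homComponent_mul_eq_zero hA h, smul_zero, add_zero, homComponent_homComponent]
    rcases h.lt_or_eq with h | rfl
    · rw [if_neg h.ne, smul_zero, add_zero]
      exact ih (by omega)
    · rw [if_pos rfl, homComponent_partialSolution_of_lt A (lt_add_one r), zero_add,
        ← Nat.cast_smul_eq_nsmul K, smul_smul, Nat.cast_succ,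
        mul_inv_cancel₀ (Nat.cast_add_one_ne_zero r), one_smul]

variable {M : Type*} [AddCommGroup M] {w : σ → M} {ε : κ → M}

theorem partialSolution_mem (hA : A ∈ weightedHomogeneousSubalgebra K w ε) (r : ℕ) :
    partialSolution A r ∈ weightedHomogeneousSubalgebra K w ε := by
  induction r with
  | zero => exact Subalgebra.one_mem _
  | succ r ih =>
    exact Subalgebra.add_mem _ ih
      (Subalgebra.smul_mem _ (homComponent_mem (Subalgebra.mul_mem _ ih hA) _) _)

theorem exists_mem_euler_eq_mul [CharZero K] [Fintype σ] [LinearOrder M] [IsOrderedAddMonoid M]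
    [Archimedean M] (hw : ∀ i, 0 < w i) (hA : A ∈ weightedHomogeneousSubalgebra K w ε)
    (hA0 : homComponent 0 A = 0) :
    ∃ Ψ ∈ weightedHomogeneousSubalgebra K w ε, homComponent 0 Ψ = 1 ∧ euler Ψ = Ψ * A := by
  obtain ⟨N, hN⟩ := exists_homComponent_eq_zero_of_mem (R := K) (ε := ε) hw
  have hstable : ∀ r, N ≤ r → partialSolution A r = partialSolution A N := by
    intro r hr
    induction r, hr using Nat.le_induction with
    | base => rfl
    | succ r hr ih =>
      rw [partialSolution, hN (r + 1) (by omega) _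
        (Subalgebra.mul_mem _ (partialSolution_mem hA r) hA), smul_zero, add_zero, ih]
  refine ⟨partialSolution A N, partialSolution_mem hA N, homComponent_zero_partialSolution A N,
    ext_homComponent fun n => ?_⟩
  rw [← hstable (max n N) (le_max_right n N), homComponent_euler]
  exact nsmul_homComponent_partialSolution hA0 (le_max_left n N)

end Existence

end Field

end Matrix

/-- the compatible system `∂_m Ψ = Ψ B_m` with weighted homogeneous
polynomial coefficients (all variable weights positive) has a unique solution which is
analytic at `w = 0` and normalized by `Ψ(0) = Id`; its entries are weighted homogeneous
polynomials. -/
theorem stmt17 (d n : ℕ) (c : Fin d → ℚ) (hc : ∀ m, 0 < c m) (ε : Fin n → ℚ)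
    (B : Fin d → Matrix (Fin n) (Fin n) (MvPolynomial (Fin d) ℂ))
    (hhom : ∀ m s j, IsWeightedHomogeneous c (B m s j) (ε j - ε s - c m))
    (hcompat : ∀ m m' : Fin d,
      Matrix.of (fun s j => pderiv m (B m' s j)) + B m * B m'
        = Matrix.of (fun s j => pderiv m' (B m s j)) + B m' * B m) :
    (∃! Ψ : Matrix (Fin n) (Fin n) (MvPolynomial (Fin d) ℂ),
      (∀ m, Matrix.of (fun s j => pderiv m (Ψ s j)) = Ψ * B m) ∧
      Matrix.of (fun s j => constantCoeff (Ψ s j)) = (1 : Matrix (Fin n) (Fin n) ℂ)) ∧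
    (∀ Ψ : Matrix (Fin n) (Fin n) (MvPolynomial (Fin d) ℂ),
      ((∀ m, Matrix.of (fun s j => pderiv m (Ψ s j)) = Ψ * B m) ∧
        Matrix.of (fun s j => constantCoeff (Ψ s j)) = (1 : Matrix (Fin n) (Fin n) ℂ)) →
      ∀ s j, IsWeightedHomogeneous c (Ψ s j) (ε j - ε s)) := by
  obtain ⟨Ψ, hΨmem, hΨ0, hΨeuler⟩ := Matrix.exists_mem_euler_eq_mul hc (Matrix.radial_mem hhom)
    (Matrix.homComponent_zero_radial B)
  have hΨ : ∀ m, Matrix.partialDeriv m Ψ = Ψ * B m :=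
    Matrix.partialDeriv_eq_mul_of_euler_eq_mul hcompat hΨeuler
  have unique : ∀ Φ : Matrix (Fin n) (Fin n) (MvPolynomial (Fin d) ℂ),
      (∀ m, Matrix.partialDeriv m Φ = Φ * B m) → Φ.map constantCoeff = 1 → Φ = Ψ :=
    fun Φ hΦ hΦ0 => Matrix.eq_of_partialDeriv_eq_mul hΦ hΨ <| by
      rw [Matrix.homComponent_zero_eq_one_iff.2 hΦ0, hΨ0]
  refine ⟨⟨Ψ, ⟨hΨ, Matrix.homComponent_zero_eq_one_iff.1 hΨ0⟩, fun Φ hΦ => unique Φ hΦ.1 hΦ.2⟩,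
    ?_⟩
  rintro Φ ⟨hΦ, hΦ0⟩
  exact unique Φ hΦ hΦ0 ▸ hΨmem
end
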